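/- arXiv:1409.7425 — 11 statements merged into one kernel-verified Lean document; each statement's English description precedes it below -/
import Mathlib

section
/- Let P be a finite set of points in a metric space and r > 0. If an r-net of P has at most k points, then the optimal k-center clustering radius of P is strictly less than r. Conversely, if every r-net of P has more than k points, then r is at most twice the optimal k-center clustering radius. -/
/-!
If an `r`-net `C` has at most `k` points, it is itself a `k`-center solution, and finiteness of
`P` turns the strict bounds `dist p C < r` into a uniform radius `ρ < r`. Conversely, an `r`-net
always exists (a maximal `r`-separated subset of `P`); if `k` centers served `P` within radius
`< r / 2`, no center could serve two points of the net, so the net would have at most `k` points.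
-/

/-- The optimal `k`-center clustering radius of a finite point set `P`:
the infimum over subsets `S ⊆ P` with at most `k` points of the maximum distance
of a point of `P` to `S`. -/
noncomputable def kCenterOpt {X : Type*} [MetricSpace X] (P : Finset X) (k : ℕ) : ℝ :=
  sInf {ρ : ℝ | 0 ≤ ρ ∧ ∃ S : Finset X, S ⊆ P ∧ S.card ≤ k ∧ ∀ p ∈ P, ∃ c ∈ S, dist p c ≤ ρ}

section KCenter

open Finset

variable {X : Type*} [MetricSpace X] {P S C : Finset X} {k : ℕ} {r ρ : ℝ}

theorem kCenterOpt_le (hρ : 0 ≤ ρ) (hSP : S ⊆ P) (hS : S.card ≤ k)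
    (hcov : ∀ p ∈ P, ∃ c ∈ S, dist p c ≤ ρ) : kCenterOpt P k ≤ ρ :=
  csInf_le ⟨0, fun _ h => h.1⟩ ⟨hρ, S, hSP, hS, hcov⟩

theorem kCenterOpt_lt_of_forall_exists_dist_lt (hr : 0 < r) (hSP : S ⊆ P) (hS : S.card ≤ k)
    (hcov : ∀ p ∈ P, ∃ c ∈ S, dist p c < r) : kCenterOpt P k < r := by
  classical
  let D := insert 0 (((P ×ˢ S).filter fun x => dist x.1 x.2 < r).image fun x => dist x.1 x.2)
  have hD : D.Nonempty := insert_nonempty _ _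
  refine (kCenterOpt_le (ρ := D.max' hD) ?_ hSP hS fun p hp => ?_).trans_lt ?_
  · exact D.le_max' 0 (mem_insert_self _ _)
  · obtain ⟨c, hc, hpc⟩ := hcov p hp
    refine ⟨c, hc, D.le_max' _ (mem_insert_of_mem (mem_image.2 ⟨(p, c), ?_, rfl⟩))⟩
    exact mem_filter.2 ⟨mem_product.2 ⟨hp, hc⟩, hpc⟩
  · simp only [D, max'_lt_iff, mem_insert, mem_image, mem_filter]
    rintro _ (rfl | ⟨x, ⟨-, hx⟩, rfl⟩)
    exacts [hr, hx]

theorem exists_kCenter_solution (P : Finset X) (hk : 1 ≤ k) :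
    ∃ ρ, 0 ≤ ρ ∧ ∃ S : Finset X, S ⊆ P ∧ S.card ≤ k ∧ ∀ p ∈ P, ∃ c ∈ S, dist p c ≤ ρ := by
  rcases P.eq_empty_or_nonempty with rfl | hP
  · exact ⟨0, le_rfl, ∅, empty_subset _, by simp, by simp⟩
  obtain ⟨p₀, hp₀⟩ := hP
  refine ⟨P.sup' ⟨p₀, hp₀⟩ (dist · p₀), dist_nonneg.trans (le_sup' (dist · p₀) hp₀), {p₀},
    singleton_subset_iff.2 hp₀, by simpa using hk, fun p hp => ⟨p₀, mem_singleton_self _, ?_⟩⟩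
  exact le_sup' (dist · p₀) hp

theorem exists_forall_exists_dist_lt_of_kCenterOpt_lt (hk : 1 ≤ k) (h : kCenterOpt P k < r) :
    ∃ S ⊆ P, S.card ≤ k ∧ ∀ p ∈ P, ∃ c ∈ S, dist p c < r := by
  obtain ⟨ρ, ⟨-, S, hSP, hS, hcov⟩, hρ⟩ :=
    exists_lt_of_csInf_lt (exists_kCenter_solution P hk) h
  refine ⟨S, hSP, hS, fun p hp => ?_⟩
  obtain ⟨c, hc, hpc⟩ := hcov p hp
  exact ⟨c, hc, hpc.trans_lt hρ⟩

theorem exists_net (P : Finset X) (hr : 0 < r) :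
    ∃ C ⊆ P, (C : Set X).Pairwise (fun p q => r ≤ dist p q) ∧ ∀ p ∈ P, ∃ q ∈ C, dist p q < r := by
  classical
  obtain ⟨C, hC, hmax⟩ := exists_max_image
    (P.powerset.filter fun C : Finset X => (C : Set X).Pairwise (fun p q => r ≤ dist p q))
    card ⟨∅, by simp⟩
  rw [mem_filter, mem_powerset] at hC
  refine ⟨C, hC.1, hC.2, fun p hp => ?_⟩
  by_contra! hfar
  have hpC : p ∉ C := fun hpC => (hfar p hpC).not_gt (by simpa using hr)
  have hsep : ((insert p C : Finset X) : Set X).Pairwise (fun p q => r ≤ dist p q) := by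
    rw [coe_insert, Set.pairwise_insert_of_notMem (mem_coe.not.2 hpC)]
    exact ⟨hC.2, fun q hq => ⟨hfar q hq, dist_comm p q ▸ hfar q hq⟩⟩
  have := hmax (insert p C) (mem_filter.2 ⟨mem_powerset.2 (insert_subset hp hC.1), hsep⟩)
  rw [card_insert_of_notMem hpC] at this
  omega

theorem card_le_card_of_pairwise_le_dist (hC : (C : Set X).Pairwise (fun p q => r ≤ dist p q))
    (hcov : ∀ p ∈ C, ∃ c ∈ S, dist p c < r / 2) : C.card ≤ S.card := by
  refine card_le_card_of_forall_subsingleton (fun p c => dist p c < r / 2) hcov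
    fun c _ p hp q hq => ?_
  by_contra hpq
  have := dist_triangle_right p q c
  linarith [hC hp.1 hq.1 hpq, hp.2, hq.2]

end KCenter

theorem stmt1_general {X : Type*} [MetricSpace X] (P : Finset X)
    (r : ℝ) (hr : 0 < r) (k : ℕ) (hk : 1 ≤ k) :
    ((∃ C : Finset X, C ⊆ P ∧ (∀ p ∈ C, ∀ q ∈ C, p ≠ q → r ≤ dist p q) ∧
        (∀ p ∈ P, ∃ q ∈ C, dist p q < r) ∧ C.card ≤ k) →
      kCenterOpt P k < r) ∧
    ((∀ C : Finset X, C ⊆ P → (∀ p ∈ C, ∀ q ∈ C, p ≠ q → r ≤ dist p q) →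
        (∀ p ∈ P, ∃ q ∈ C, dist p q < r) → k < C.card) →
      r ≤ 2 * kCenterOpt P k) := by
  refine ⟨fun ⟨C, hCP, _, hnet, hC⟩ => kCenterOpt_lt_of_forall_exists_dist_lt hr hCP hC hnet,
    fun hnets => ?_⟩
  by_contra! hopt
  obtain ⟨S, -, hS, hcov⟩ :=
    exists_forall_exists_dist_lt_of_kCenterOpt_lt (P := P) (r := r / 2) hk (by linarith)
  obtain ⟨C, hCP, hsep, hnet⟩ := exists_net P hr
  have hCS := card_le_card_of_pairwise_le_dist hsep fun p hp => hcov p (hCP hp)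
  have := hnets C hCP (fun p hp q hq => hsep hp hq) hnet
  omega

/-- If some `r`-net of `P` has at most `k` points, then the optimal `k`-center radius is `< r`;
if every `r`-net of `P` has more than `k` points, then `r` is at most twice the optimal
`k`-center radius. -/
theorem stmt1 {X : Type*} [MetricSpace X] (P : Finset X) (hP : P.Nonempty)
    (r : ℝ) (hr : 0 < r) (k : ℕ) (hk : 1 ≤ k) :
    ((∃ C : Finset X, C ⊆ P ∧ (∀ p ∈ C, ∀ q ∈ C, p ≠ q → r ≤ dist p q) ∧
        (∀ p ∈ P, ∃ q ∈ C, dist p q < r) ∧ C.card ≤ k) →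
      kCenterOpt P k < r) ∧
    ((∀ C : Finset X, C ⊆ P → (∀ p ∈ C, ∀ q ∈ C, p ≠ q → r ≤ dist p q) →
        (∀ p ∈ P, ∃ q ∈ C, dist p q < r) → k < C.card) →
      r ≤ 2 * kCenterOpt P k) :=
  stmt1_general P r hr k hk
end

section
/- Let P be a finite point set in a metric space, Q a Δ-translation of P, and k a fixed index. Then the k-th smallest pairwise distance of P and the k-th smallest pairwise distance of Q differ by at most 2Δ. -/
/-!
Pairing each pair `(p, p')` of `P` with `(f p, f p')` matches the distance multisets of `P` and
`Q` so that matched distances differ by at most `2Δ`. Under such a matching, at least `k` values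
of one multiset lie below its `k`-th smallest value `t`, hence at least `k` values of the other
lie below `t + 2Δ`, so its `k`-th smallest value is at most `t + 2Δ`.
-/

/-- The `k`-th smallest value of a multiset of reals (1-indexed). -/
noncomputable def kthSmallest (S : Multiset ℝ) (k : ℕ) : ℝ :=
  (S.sort (· ≤ ·)).getD (k - 1) 0

/-- The multiset of all pairwise distances `dist x y` over ordered pairs `x ≠ y` of `P`. -/
def pairDists {X : Type*} [MetricSpace X] [DecidableEq X] (P : Finset X) : Multiset ℝ :=
  (((P ×ˢ P).filter fun q => q.1 ≠ q.2).val).map fun q => dist q.1 q.2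

theorem List.SortedLE.getElem_le_iff_lt_length_filter {α : Type*} [LinearOrder α] {l : List α}
    (hl : l.SortedLE) {i : ℕ} (hi : i < l.length) (x : α) :
    l[i] ≤ x ↔ i < (l.filter (· ≤ x)).length := by
  constructor
  · intro hix
    have htake : (l.take (i + 1)).filter (· ≤ x) = l.take (i + 1) := by
      refine List.filter_eq_self.2 fun a ha => ?_
      obtain ⟨j, hj, rfl⟩ := List.mem_take_iff_getElem.1 ha
      exact decide_eq_true ((hl.getElem_le_getElem_of_le (by omega)).trans hix)
    calc i < (l.take (i + 1)).length := by rw [List.length_take]; omega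
      _ = ((l.take (i + 1)).filter (· ≤ x)).length := by rw [htake]
      _ ≤ (l.filter (· ≤ x)).length := ((List.take_sublist _ _).filter _).length_le
  · intro hlt
    by_contra! hxi
    have hdrop : (l.drop i).filter (· ≤ x) = [] := by
      refine List.filter_eq_nil_iff.2 fun a ha => ?_
      obtain ⟨j, hj, rfl⟩ := List.mem_drop_iff_getElem.1 ha
      simpa using hxi.trans_le (hl.getElem_le_getElem_of_le (by omega))
    have htake := List.length_filter_le (· ≤ x) (l.take i)
    rw [← List.take_append_drop i l, List.filter_append, hdrop, List.append_nil] at hlt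
    simp only [List.length_take] at htake
    omega

theorem kthSmallest_le_iff {S : Multiset ℝ} {k : ℕ} (hk1 : 1 ≤ k) (hk2 : k ≤ S.card) (x : ℝ) :
    kthSmallest S k ≤ x ↔ k ≤ (S.filter (· ≤ x)).card := by
  have hlen : (S.sort (· ≤ ·)).length = S.card := Multiset.length_sort _
  have hcard : (S.filter (· ≤ x)).card = ((S.sort (· ≤ ·)).filter (· ≤ x)).length := by
    conv_lhs => rw [← Multiset.sort_eq S (· ≤ ·)]
    rw [Multiset.filter_coe, Multiset.coe_card]
  rw [kthSmallest, List.getD_eq_getElem _ _ (by omega), hcard,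
    (Multiset.pairwise_sort S _).sortedLE.getElem_le_iff_lt_length_filter]
  omega

theorem Multiset.card_filter_le_card_filter {α : Type*} {s : Multiset α} {p q : α → Prop}
    [DecidablePred p] [DecidablePred q] (h : ∀ a ∈ s, p a → q a) :
    (s.filter p).card ≤ (s.filter q).card := by
  rw [Multiset.filter_congr fun a ha => (and_iff_left_of_imp (h a ha)).symm]
  exact Multiset.card_le_card (Multiset.monotone_filter_right s fun _ => And.right)

theorem kthSmallest_map_le_add {α : Type*} {s : Multiset α} {u v : α → ℝ} {ε : ℝ}
    (h : ∀ a ∈ s, u a ≤ v a + ε) {k : ℕ} (hk1 : 1 ≤ k) (hk2 : k ≤ s.card) :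
    kthSmallest (s.map u) k ≤ kthSmallest (s.map v) k + ε := by
  set t := kthSmallest (s.map v) k
  have hv : k ≤ ((s.map v).filter (· ≤ t)).card :=
    (kthSmallest_le_iff hk1 (by simpa using hk2) t).1 le_rfl
  rw [kthSmallest_le_iff hk1 (by simpa using hk2)]
  refine hv.trans ?_
  simp only [Multiset.filter_map, Multiset.card_map]
  exact Multiset.card_filter_le_card_filter fun a ha hva => (h a ha).trans (by simpa using hva)

theorem abs_kthSmallest_map_sub_le {α : Type*} {s : Multiset α} {u v : α → ℝ} {ε : ℝ}
    (h : ∀ a ∈ s, |u a - v a| ≤ ε) {k : ℕ} (hk1 : 1 ≤ k) (hk2 : k ≤ s.card) :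
    |kthSmallest (s.map u) k - kthSmallest (s.map v) k| ≤ ε := by
  rw [abs_sub_le_iff]
  constructor
  · exact sub_le_iff_le_add'.2 <| kthSmallest_map_le_add
      (fun a ha => sub_le_iff_le_add'.1 (abs_sub_le_iff.1 (h a ha)).1) hk1 hk2
  · exact sub_le_iff_le_add'.2 <| kthSmallest_map_le_add
      (fun a ha => sub_le_iff_le_add'.1 (abs_sub_le_iff.1 (h a ha)).2) hk1 hk2

theorem pairDists_image {X Y : Type*} [MetricSpace X] [DecidableEq X] [MetricSpace Y]
    [DecidableEq Y] {f : X → Y} {P : Finset X} (hf : Set.InjOn f P) :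
    pairDists (P.image f) =
      ((P ×ˢ P).filter fun q => q.1 ≠ q.2).val.map fun q => dist (f q.1) (f q.2) := by
  have hoff : ((P.image f ×ˢ P.image f).filter fun q => q.1 ≠ q.2) =
      ((P ×ˢ P).filter fun q => q.1 ≠ q.2).image (Prod.map f f) := by
    ext ⟨y₁, y₂⟩
    simp only [Finset.mem_filter, Finset.mem_product, Finset.mem_image, Prod.exists,
      Prod.map_apply, Prod.mk.injEq]
    constructor
    · rintro ⟨⟨⟨p₁, hp₁, rfl⟩, ⟨p₂, hp₂, rfl⟩⟩, hne⟩
      exact ⟨p₁, p₂, ⟨⟨hp₁, hp₂⟩, fun h => hne (congrArg f h)⟩, rfl, rfl⟩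
    · rintro ⟨p₁, p₂, ⟨⟨hp₁, hp₂⟩, hne⟩, rfl, rfl⟩
      exact ⟨⟨⟨p₁, hp₁, rfl⟩, ⟨p₂, hp₂, rfl⟩⟩, fun h => hne (hf hp₁ hp₂ h)⟩
  have hinj : Set.InjOn (Prod.map f f) ((P ×ˢ P).filter fun q => q.1 ≠ q.2) := by
    rintro ⟨p₁, p₂⟩ hp ⟨p₁', p₂'⟩ hp' h
    simp only [Finset.coe_filter, Finset.mem_product, Set.mem_ofPred_eq] at hp hp'
    simp only [Prod.map_apply, Prod.mk.injEq] at h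
    exact Prod.ext (hf hp.1.1 hp'.1.1 h.1) (hf hp.1.2 hp'.1.2 h.2)
  rw [pairDists, hoff, Finset.image_val_of_injOn hinj, Multiset.map_map]
  rfl

/-- If `Q` is a `Δ`-translation of a finite point set `P` (a bijection moving each point by
at most `Δ`), then the `k`-th smallest pairwise distances of `P` and of `Q` differ by
at most `2Δ`. -/
theorem stmt4 {X : Type*} [MetricSpace X] [DecidableEq X] (P Q : Finset X) (Δ : ℝ)
    (f : X → X) (hbij : Set.BijOn f P Q) (hmove : ∀ p ∈ P, dist p (f p) ≤ Δ)
    (k : ℕ) (hk1 : 1 ≤ k) (hk2 : k ≤ Multiset.card (pairDists P)) :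
    |kthSmallest (pairDists P) k - kthSmallest (pairDists Q) k| ≤ 2 * Δ := by
  obtain rfl : Q = P.image f := by
    rw [← Finset.coe_inj, Finset.coe_image, hbij.image_eq]
  rw [pairDists_image hbij.injOn]
  refine abs_kthSmallest_map_sub_le (fun q hq => ?_) hk1 (by simpa [pairDists] using hk2)
  obtain ⟨⟨hq₁, hq₂⟩, -⟩ : (q.1 ∈ P ∧ q.2 ∈ P) ∧ q.1 ≠ q.2 := by simpa using hq
  calc |dist q.1 q.2 - dist (f q.1) (f q.2)|
      ≤ dist q.1 (f q.1) + dist q.2 (f q.2) := dist_dist_dist_le _ _ _ _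
    _ ≤ 2 * Δ := by linarith [hmove q.1 hq₁, hmove q.2 hq₂]
end

section
/- Let P be a finite point set in a metric space, r > 0, and ε > 0. Any (2+ε)r-net of P contains at most half of the points of P whose nearest-neighbor distance in P is at most r. -/
/-! Send each point of `C ∩ Close(P, r)` to a nearest neighbour, at distance `≤ r`. That neighbour
is again in `Close(P, r)` but not in `C`, and two points of `C` cannot share it, since they are
more than `2r` apart. This injects `C ∩ Close(P, r)` into `Close(P, r) \ C`. -/

open Set

theorem Set.two_mul_ncard_inter_le_of_injOn {α : Type*} {A S : Set α} (hS : S.Finite)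
    (f : α → α) (hf : MapsTo f (A ∩ S) (S \ A)) (hinj : InjOn f (A ∩ S)) :
    2 * (A ∩ S).ncard ≤ S.ncard := by
  have hle : (A ∩ S).ncard ≤ (S \ A).ncard := ncard_le_ncard_of_injOn f hf hinj hS.sdiff
  have hsplit := ncard_inter_add_ncard_sdiff_eq_ncard S A hS
  rw [inter_comm] at hsplit
  omega

theorem two_mul_ncard_inter_le_of_separated {X : Type*} [MetricSpace X] {C S : Set X} {r : ℝ}
    (hS : S.Finite) (hsep : ∀ p ∈ C, ∀ q ∈ C, p ≠ q → 2 * r < dist p q)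
    (hnear : ∀ c ∈ C ∩ S, ∃ q ∈ S, q ≠ c ∧ dist c q ≤ r) :
    2 * (C ∩ S).ncard ≤ S.ncard := by
  choose! f hfS hfne hfdist using hnear
  refine two_mul_ncard_inter_le_of_injOn hS f (fun c hc => ⟨hfS c hc, fun hfC => ?_⟩) ?_
  · -- `c` and `f c` would be two points of `C` at distance `≤ r < 2r`.
    have := hsep c hc.1 (f c) hfC (hfne c hc).symm
    linarith [hfdist c hc, dist_nonneg (x := c) (y := f c)]
  · intro c₁ h₁ c₂ h₂ hf
    by_contra hne
    have := hsep c₁ h₁.1 c₂ h₂.1 hne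
    have := dist_triangle_right c₁ c₂ (f c₂)
    linarith [hfdist c₂ h₂, hf ▸ hfdist c₁ h₁]

theorem stmt5_general {X : Type*} [MetricSpace X] (P : Set X) (hfin : P.Finite)
    (C : Set X) (r ε : ℝ) (hr : 0 < r) (hε : 0 < ε)
    (hsep : ∀ p ∈ C, ∀ q ∈ C, p ≠ q → (2 + ε) * r ≤ dist p q) :
    2 * (C ∩ {p ∈ P | ∃ q ∈ P, q ≠ p ∧ dist p q ≤ r}).ncard ≤
      ({p ∈ P | ∃ q ∈ P, q ≠ p ∧ dist p q ≤ r}).ncard := by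
  refine two_mul_ncard_inter_le_of_separated (r := r) (hfin.subset (sep_subset _ _))
    (fun p hp q hq hpq => by nlinarith [hsep p hp q hq hpq]) ?_
  rintro c ⟨-, hcP, q, hqP, hqc, hcq⟩
  exact ⟨q, ⟨hqP, c, hcP, hqc.symm, by rwa [dist_comm]⟩, hqc, hcq⟩

/-- Any `(2+ε)r`-net `C` of a finite point set `P` contains at most half of the points of
`Close(P,r) = {p ∈ P : dd(p,P) ≤ r}`, the points whose nearest-neighbor distance in `P`
is at most `r`. -/
theorem stmt5 {X : Type*} [MetricSpace X] (P : Set X) (hfin : P.Finite)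
    (C : Set X) (r ε : ℝ) (hr : 0 < r) (hε : 0 < ε)
    (hCP : C ⊆ P)
    (hsep : ∀ p ∈ C, ∀ q ∈ C, p ≠ q → (2 + ε) * r ≤ dist p q)
    (hcov : ∀ p ∈ P, ∃ q ∈ C, dist p q < (2 + ε) * r) :
    2 * (C ∩ {p ∈ P | ∃ q ∈ P, q ≠ p ∧ dist p q ≤ r}).ncard ≤
      ({p ∈ P | ∃ q ∈ P, q ≠ p ∧ dist p q ≤ r}).ncard :=
  stmt5_general P hfin C r ε hr hε hsep
end

section
/- Let C be a (2+ε)r-net of a finite point set P, with ε > 0. Then the map assigning to each net point p of C that lies in Close(P,r) some point of Close(P,r) within distance r of p that is not a net point is well-defined and injective: every such p has a non-net neighbor in Close(P,r) at distance at most r, and the balls of radius r around distinct net points in Close(P,r) are disjoint. -/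
/-- Let `C` be a `(2+ε)r`-net of a finite point set `P`, `ε > 0`. Every net point `p` of `C`
lying in `Close(P,r)` has a non-net neighbor in `Close(P,r)` at distance at most `r`, and the
balls of radius `r` around distinct net points of `C ∩ Close(P,r)` are disjoint. -/
theorem stmt6 {X : Type*} [MetricSpace X] (P : Set X) (hfin : P.Finite)
    (C : Set X) (r ε : ℝ) (hr : 0 < r) (hε : 0 < ε)
    (hCP : C ⊆ P)
    (hsep : ∀ p ∈ C, ∀ q ∈ C, p ≠ q → (2 + ε) * r ≤ dist p q)
    (hcov : ∀ p ∈ P, ∃ q ∈ C, dist p q < (2 + ε) * r) :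
    (∀ p ∈ C ∩ {p ∈ P | ∃ q ∈ P, q ≠ p ∧ dist p q ≤ r},
      ∃ q ∈ {p ∈ P | ∃ q' ∈ P, q' ≠ p ∧ dist p q' ≤ r}, q ∉ C ∧ dist p q ≤ r) ∧
    (∀ p ∈ C ∩ {p ∈ P | ∃ q ∈ P, q ≠ p ∧ dist p q ≤ r},
      ∀ p' ∈ C ∩ {p ∈ P | ∃ q ∈ P, q ≠ p ∧ dist p q ≤ r}, p ≠ p' →
        Disjoint (Metric.closedBall p r) (Metric.closedBall p' r)) := by
  have hlt : r < (2 + ε) * r := by nlinarith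
  constructor
  · rintro p ⟨hpC, hpP, q, hqP, hqp, hdq⟩
    refine ⟨q, ⟨hqP, p, hpP, Ne.symm hqp, by
      rw [dist_comm]; exact hdq⟩, ?_, hdq⟩
    intro hqC
    exact absurd hdq (not_le.mpr (lt_of_lt_of_le hlt (hsep p hpC q hqC (Ne.symm hqp))))
  · rintro p ⟨hpC, -⟩ p' ⟨hp'C, -⟩ hne
    rw [Set.disjoint_left]
    intro x hx hx'
    simp only [Metric.mem_closedBall] at hx hx'
    have := hsep p hpC p' hp'C hne
    have htri := dist_triangle p x p'
    rw [dist_comm p x] at htri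
    nlinarith
end

section
/- Let f be a function on weighted point sets satisfying: |f(P) - f(Q)| ≤ 2Δ whenever Q is a Δ-translation of P. Suppose a sequence of point sets P_0, P_1, ..., P_k is generated where at each step i either P_i = P_{i-1} with f unchanged (prune), or P_i is a 3r_i-translation of P_{i-1} (net), and the net radii satisfy r_j ≥ 3 r_i whenever a net step i precedes step j. Then |f(P_i) - f(P_0)| ≤ 9 r_i for every i. -/
/-- `Q` is a `Δ`-translation of `P`: a bijection of `P` onto `Q` moving each point by at
most `Δ`. -/
def IsTranslation {X : Type*} [MetricSpace X] (P Q : Set X) (Δ : ℝ) : Prop :=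
  ∃ f : X → X, Set.BijOn f P Q ∧ ∀ p ∈ P, dist p (f p) ≤ Δ

/-- Let `f` be a function on point sets which changes by at most `2Δ` under `Δ`-translations.
If a sequence `P 0, …, P k` is generated so that at each step `i` either `f` is unchanged
(prune) or `P i` is a `3 r i`-translation of `P (i-1)` (net step, `i ∈ N`), and net radii
satisfy `r j ≥ 3 r i` whenever a net step `i` precedes a step `j`, then
`|f (P i) - f (P 0)| ≤ 9 r i` for every step `i`. -/
theorem stmt8 {X : Type*} [MetricSpace X] (f : Set X → ℝ)
    (hLip : ∀ (P Q : Set X) (Δ : ℝ), IsTranslation P Q Δ → |f P - f Q| ≤ 2 * Δ)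
    (k : ℕ) (P : ℕ → Set X) (r : ℕ → ℝ) (hpos : ∀ i, 0 < r i) (N : Finset ℕ)
    (hN : ∀ i ∈ N, 1 ≤ i ∧ i ≤ k)
    (hstep : ∀ i, 1 ≤ i → i ≤ k →
      (i ∈ N ∧ IsTranslation (P (i - 1)) (P i) (3 * r i)) ∨
      (i ∉ N ∧ f (P i) = f (P (i - 1))))
    (hgrow : ∀ i ∈ N, ∀ j, i < j → j ≤ k → 3 * r i ≤ r j) :
    ∀ i ≤ k, |f (P i) - f (P 0)| ≤ 9 * r i := by
  -- Strengthened invariant: either `f (P i) = f (P 0)`, or there is a net step `m ≤ i`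
  -- with `f (P i) = f (P m)` and `|f (P m) - f (P 0)| ≤ 9 r m`.
  have key : ∀ i, i ≤ k → (f (P i) = f (P 0) ∨
      ∃ m ∈ N, m ≤ i ∧ f (P i) = f (P m) ∧ |f (P m) - f (P 0)| ≤ 9 * r m) := by
    intro i
    induction i with
    | zero => intro _; exact Or.inl rfl
    | succ n ih =>
      intro hle
      have hn : n ≤ k := Nat.le_of_succ_le hle
      rcases hstep (n + 1) (Nat.le_add_left 1 n) hle with ⟨hmem, htr⟩ | ⟨_, heq⟩
      · -- net step
        have hd : |f (P (n + 1)) - f (P n)| ≤ 6 * r (n + 1) := by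
          have := hLip (P n) (P (n + 1)) (3 * r (n + 1)) (by simpa using htr)
          rw [abs_sub_comm] at this
          linarith
        rcases ih hn with h0 | ⟨m, hmN, hmle, hfe, hb⟩
        · refine Or.inr ⟨n + 1, hmem, le_rfl, rfl, ?_⟩
          rw [h0] at hd; linarith [hpos (n+1)]
        · have hg : 3 * r m ≤ r (n + 1) :=
            hgrow m hmN (n + 1) (Nat.lt_succ_of_le hmle) hle
          refine Or.inr ⟨n + 1, hmem, le_rfl, rfl, ?_⟩
          calc |f (P (n + 1)) - f (P 0)|
              ≤ |f (P (n + 1)) - f (P n)| + |f (P n) - f (P 0)| := abs_sub_le _ _ _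
            _ ≤ 6 * r (n + 1) + 9 * r m := add_le_add hd (by rw [hfe]; exact hb)
            _ ≤ 9 * r (n + 1) := by linarith
      · -- prune step
        rcases ih hn with h0 | ⟨m, hmN, hmle, hfe, hb⟩
        · exact Or.inl (by simpa using heq.trans h0)
        · exact Or.inr ⟨m, hmN, hmle.trans (Nat.le_succ n), (by simpa using heq.trans hfe),
            hb⟩
  intro i hik
  rcases key i hik with h0 | ⟨m, hmN, hmle, hfe, hb⟩
  · rw [h0, sub_self, abs_zero]; linarith [hpos i]
  · rw [hfe]
    rcases eq_or_lt_of_le hmle with rfl | hlt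
    · exact hb
    · have := hgrow m hmN i hlt hik
      linarith [hpos i]
end

section
/- With the setup of the net-and-prune algorithm and constant c = 37: if at every net iteration i the decision r_i · 37 < f(P_{i-1}) held, then for every net iteration i, r_i ≤ f(P_0)/28. -/
/-- Net-and-prune with constant `c = 37`: `F i = f(P i)` are the function values along the
run, `r i` the sampled radii, `N` the net iterations. Prune steps leave `f` unchanged, the
accumulated-translation (Lipschitz) bound `|F i - F 0| ≤ 9 r i` holds, net radii grow by a
factor `≥ 3`, and at every net iteration the decision `37 r i < F (i-1)` held. Then every
net radius satisfies `r i ≤ F 0 / 28`. -/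
theorem stmt9 (F r : ℕ → ℝ) (k : ℕ) (N : Finset ℕ)
    (hpos : ∀ i, 0 < r i)
    (hN : ∀ i ∈ N, 1 ≤ i ∧ i ≤ k)
    (hprune : ∀ i, 1 ≤ i → i ≤ k → i ∉ N → F i = F (i - 1))
    (hLip : ∀ i ≤ k, |F i - F 0| ≤ 9 * r i)
    (hgrow : ∀ i ∈ N, ∀ j, i < j → j ≤ k → 3 * r i ≤ r j)
    (hdec : ∀ i ∈ N, 37 * r i < F (i - 1)) :
    ∀ i ∈ N, r i ≤ F 0 / 28 := by
  have claim : ∀ m, m ≤ k → F m = F 0 ∨ ∃ j ∈ N, j ≤ m ∧ F m = F j := by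
    intro m
    induction m with
    | zero => intro _; exact Or.inl rfl
    | succ n ih =>
      intro hmk
      by_cases hmem : n + 1 ∈ N
      · exact Or.inr ⟨n + 1, hmem, le_refl _, rfl⟩
      · have heq : F (n + 1) = F n := by
          simpa using hprune (n + 1) (Nat.le_add_left 1 n) hmk hmem
        rcases ih (Nat.le_of_succ_le hmk) with h | ⟨j, hj, hjm, hje⟩
        · exact Or.inl (heq.trans h)
        · exact Or.inr ⟨j, hj, Nat.le_succ_of_le hjm, heq.trans hje⟩
  intro i hi
  obtain ⟨hi1, hik⟩ := hN i hi
  have hri := hpos i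
  have hdi := hdec i hi
  rcases claim (i - 1) (le_trans (Nat.sub_le i 1) hik) with h | ⟨j, hj, hjm, hje⟩
  · rw [h] at hdi
    rw [le_div_iff₀ (by norm_num : (0:ℝ) < 28)]
    nlinarith
  · rw [hje] at hdi
    have hjlt : j < i := lt_of_le_of_lt hjm (Nat.sub_lt hi1 one_pos)
    have hg : 3 * r j ≤ r i := hgrow j hj i hjlt hik
    have hL : |F j - F 0| ≤ 9 * r j := hLip j (le_trans (le_of_lt hjlt) hik)
    have hL' : F j - F 0 ≤ 9 * r j := le_trans (le_abs_self _) hL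
    rw [le_div_iff₀ (by norm_num : (0:ℝ) < 28)]
    nlinarith
end

section
/- Let P be a set of n points in a metric space, let p ∈ P, and suppose the ball of radius s around p contains at most m points of P (excluding intermediate considerations). Partition the ball B(p, s) into m+2 concentric rings of equal width s/(m+2). Then at least one ring contains no point of P; consequently, the connected component containing p in the graph on P connecting points at distance at most s/(m+2) to each other has at most m points. -/
/-- Ring argument: if the ball of radius `s` around `p ∈ P` contains at most `m` points of
`P`, then among the `m+2` concentric rings of width `s/(m+2)` around `p` some ring is empty
of points of `P`; consequently, the connected component of `p` in the graph on `P` joining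
points at distance at most `s/(m+2)` has at most `m` points. -/
theorem stmt14 {X : Type*} [MetricSpace X] (P : Set X) (hfin : P.Finite)
    (p : X) (hp : p ∈ P) (s : ℝ) (hs : 0 < s) (m : ℕ)
    (hball : ({q ∈ P | dist p q ≤ s}).ncard ≤ m) :
    (∃ i : ℕ, i < m + 2 ∧ ∀ q ∈ P,
      ¬((i : ℝ) * (s / ((m : ℝ) + 2)) ≤ dist p q ∧
        dist p q < ((i : ℝ) + 1) * (s / ((m : ℝ) + 2)))) ∧
    ({q ∈ P | Relation.ReflTransGen
        (fun a b => a ∈ P ∧ b ∈ P ∧ dist a b ≤ s / ((m : ℝ) + 2)) p q}).ncard ≤ m := by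
  classical
  set w : ℝ := s / ((m : ℝ) + 2) with hw
  have hm2 : (0:ℝ) < (m:ℝ) + 2 := by positivity
  have hwpos : 0 < w := div_pos hs hm2
  have hws : ((m:ℝ) + 2) * w = s := by
    rw [hw]; field_simp
  have hB : ({q ∈ P | dist p q ≤ s}).Finite := hfin.subset (fun q hq => hq.1)
  -- find an empty ring with index ≥ 1
  have hexists : ∃ i : ℕ, 1 ≤ i ∧ i < m + 2 ∧ ∀ q ∈ P,
      ¬((i:ℝ) * w ≤ dist p q ∧ dist p q < ((i:ℝ)+1) * w) := by
    by_contra hcon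
    push_neg at hcon
    -- choice function picking a point in each ring
    have hsel : ∀ i : ℕ, 1 ≤ i → i < m + 2 → ∃ q, q ∈ P ∧
        (i:ℝ) * w ≤ dist p q ∧ dist p q < ((i:ℝ)+1) * w := by
      intro i h1 h2
      obtain ⟨q, hq, h3, h4⟩ := hcon i h1 h2
      exact ⟨q, hq, h3, h4⟩
    let g : ℕ → X := fun i => if hi : 1 ≤ i ∧ i < m + 2 then (hsel i hi.1 hi.2).choose else p
    have hgspec : ∀ i, 1 ≤ i → i < m + 2 → g i ∈ P ∧
        (i:ℝ) * w ≤ dist p (g i) ∧ dist p (g i) < ((i:ℝ)+1) * w := by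
      intro i h1 h2
      have : g i = (hsel i h1 h2).choose := by simp [g, h1, h2]
      rw [this]
      exact (hsel i h1 h2).choose_spec
    have hmaps : ∀ i ∈ Finset.Icc 1 (m+1),
        g i ∈ (hB.toFinset.erase p) := by
      intro i hi
      simp only [Finset.mem_Icc] at hi
      obtain ⟨hg1, hg2, hg3⟩ := hgspec i hi.1 (by omega)
      have hne : g i ≠ p := by
        intro h
        rw [h, dist_self] at hg2
        have : (0:ℝ) < (i:ℝ) * w := by
          have : (1:ℝ) ≤ (i:ℝ) := by exact_mod_cast hi.1
          nlinarith
        linarith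
      have hle : dist p (g i) ≤ s := by
        have : ((i:ℝ)+1) * w ≤ ((m:ℝ)+2) * w := by
          have : (i:ℝ) + 1 ≤ (m:ℝ) + 2 := by
            have : (i:ℝ) ≤ (m:ℝ) + 1 := by exact_mod_cast hi.2
            linarith
          nlinarith
        linarith [hws ▸ this]
      rw [Finset.mem_erase, Set.Finite.mem_toFinset]
      exact ⟨hne, hg1, hle⟩
    have hinj : Set.InjOn g (Finset.Icc 1 (m+1)) := by
      intro i hi j hj hij
      simp only [Finset.coe_Icc, Set.mem_Icc] at hi hj
      obtain ⟨_, hi2, hi3⟩ := hgspec i hi.1 (by omega)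
      obtain ⟨_, hj2, hj3⟩ := hgspec j hj.1 (by omega)
      rw [hij] at hi2 hi3
      have h1 : (i:ℝ) * w < ((j:ℝ)+1) * w := lt_of_le_of_lt hi2 hj3
      have h2 : (j:ℝ) * w < ((i:ℝ)+1) * w := lt_of_le_of_lt hj2 hi3
      have h1' : (i:ℝ) < (j:ℝ) + 1 := lt_of_mul_lt_mul_right h1 (le_of_lt hwpos)
      have h2' : (j:ℝ) < (i:ℝ) + 1 := lt_of_mul_lt_mul_right h2 (le_of_lt hwpos)
      have : i < j + 1 := by exact_mod_cast h1'
      have : j < i + 1 := by exact_mod_cast h2'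
      omega
    have hcard := Finset.card_le_card_of_injOn g hmaps hinj
    have hc1 : (Finset.Icc 1 (m+1)).card = m + 1 := by
      rw [Nat.card_Icc]; omega
    have hpmem : p ∈ hB.toFinset := by
      rw [Set.Finite.mem_toFinset]; exact ⟨hp, by rw [dist_self]; linarith⟩
    have hc2 : (hB.toFinset.erase p).card = hB.toFinset.card - 1 :=
      Finset.card_erase_of_mem hpmem
    have hc3 : hB.toFinset.card ≤ m := by
      rwa [Set.ncard_eq_toFinset_card _ hB] at hball
    have hc4 : 1 ≤ hB.toFinset.card := Finset.card_pos.mpr ⟨p, hpmem⟩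
    omega
  obtain ⟨i, hi1, hi2, hempty⟩ := hexists
  constructor
  · exact ⟨i, hi2, hempty⟩
  · -- every point in the component lies within distance < i * w
    have hreach : ∀ q, Relation.ReflTransGen
        (fun a b => a ∈ P ∧ b ∈ P ∧ dist a b ≤ w) p q → dist p q < (i:ℝ) * w := by
      intro q hrel
      induction hrel with
      | refl =>
          rw [dist_self]
          have : (1:ℝ) ≤ (i:ℝ) := by exact_mod_cast hi1
          nlinarith
      | tail h1 h2 ih =>
          rename_i b c
          obtain ⟨_, hcP, hbc⟩ := h2
          have hlt : dist p c < ((i:ℝ)+1) * w := by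
            calc dist p c ≤ dist p b + dist b c := dist_triangle _ _ _
            _ < (i:ℝ) * w + w := by linarith
            _ = ((i:ℝ)+1) * w := by ring
          by_contra hge
          push_neg at hge
          exact hempty _ hcP ⟨hge, hlt⟩
    have hsub : {q ∈ P | Relation.ReflTransGen
        (fun a b => a ∈ P ∧ b ∈ P ∧ dist a b ≤ w) p q} ⊆ {q ∈ P | dist p q ≤ s} := by
      intro q hq
      refine ⟨hq.1, ?_⟩
      have h1 := hreach q hq.2
      have h2 : (i:ℝ) * w ≤ ((m:ℝ)+2) * w := by
        have : (i:ℝ) ≤ (m:ℝ) + 2 := by exact_mod_cast le_of_lt hi2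
        nlinarith
      linarith [hws ▸ h2]
    calc ({q ∈ P | Relation.ReflTransGen
        (fun a b => a ∈ P ∧ b ∈ P ∧ dist a b ≤ w) p q}).ncard
        ≤ ({q ∈ P | dist p q ≤ s}).ncard := Set.ncard_le_ncard hsub hB
      _ ≤ m := hball
end

section
/- Let P be a finite set of points in a metric space and r > 0. Suppose a partition 𝒫 of P satisfies CC(P, r) ⊑ 𝒫 ⊑ CC(P, (1+ε)r), i.e., CC(P,r) refines 𝒫 and 𝒫 refines CC(P,(1+ε)r). Then if 𝒫 has at most k parts, the k-th longest MST edge length is ≤ (1+ε)r, and if 𝒫 has more than k parts, the k-th longest MST edge length is > r. -/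
/-- Adjacency at threshold `r`: two points of `P` at distance at most `r`. -/
def connRel {X : Type*} [MetricSpace X] (P : Set X) (r : ℝ) (a b : X) : Prop :=
  a ∈ P ∧ b ∈ P ∧ dist a b ≤ r

/-- The connected component of `p` in the `r`-connectivity graph on `P`. -/
def component {X : Type*} [MetricSpace X] (P : Set X) (r : ℝ) (p : X) : Set X :=
  {q ∈ P | Relation.ReflTransGen (connRel P r) p q}

/-- The number of connected components of the `r`-connectivity clustering `CC(P, r)`. -/
noncomputable def numCC {X : Type*} [MetricSpace X] (P : Set X) (r : ℝ) : ℕ :=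
  ((component P r) '' P).ncard

/-- The `k`-th longest MST edge of `P`, characterized as the minimum `r ≥ 0` such that
`CC(P, r)` has at most `k` connected components. -/
noncomputable def ellMST {X : Type*} [MetricSpace X] (P : Set X) (k : ℕ) : ℝ :=
  sInf {r : ℝ | 0 ≤ r ∧ numCC P r ≤ k}

lemma connRel_symm {X : Type*} [MetricSpace X] (P : Set X) (s : ℝ) :
    Symmetric (connRel P s) := by
  rintro a b ⟨ha, hb, hd⟩
  exact ⟨hb, ha, by rwa [dist_comm]⟩

lemma component_eq_of_reach {X : Type*} [MetricSpace X] (P : Set X) (s : ℝ) {p q : X}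
    (h : Relation.ReflTransGen (connRel P s) p q) :
    component P s p = component P s q := by
  have hsymm : Symmetric (Relation.ReflTransGen (connRel P s)) := fun a b hab =>
    (@Relation.ReflTransGen.stdSymm _ _ ⟨fun x y => @connRel_symm _ _ P s x y⟩).symm a b hab
  ext x
  simp only [component, Set.mem_setOf_eq]
  constructor
  · rintro ⟨hx, hpx⟩
    exact ⟨hx, (hsymm h).trans hpx⟩
  · rintro ⟨hx, hqx⟩
    exact ⟨hx, h.trans hqx⟩

/-- Key counting lemma: if every edge of the `s`-connectivity graph is actually of length
`≤ r` (in the sense used by `hcoarse`), then the number of parts is at most `numCC P s`. -/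
lemma part_card_le {X : Type*} [MetricSpace X] {P : Set X} (hfin : P.Finite)
    {r : ℝ} {Part : Set (Set X)}
    (hparts : ∀ A ∈ Part, A ⊆ P ∧ A.Nonempty)
    (hcover : ∀ p ∈ P, ∃! A, A ∈ Part ∧ p ∈ A)
    (hcoarse : ∀ p ∈ P, ∀ q ∈ P, dist p q ≤ r → ∀ A ∈ Part, p ∈ A → q ∈ A)
    {s : ℝ} (hsr : ∀ p ∈ P, ∀ q ∈ P, dist p q ≤ s → dist p q ≤ r) :
    Part.ncard ≤ numCC P s := by
  classical
  have hchain : ∀ A ∈ Part, ∀ {p q : X}, Relation.ReflTransGen (connRel P s) p q →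
      p ∈ A → q ∈ A := by
    intro A hA p q h hp
    induction h with
    | refl => exact hp
    | tail _ hbc ih =>
      obtain ⟨hb, hc, hd⟩ := hbc
      exact hcoarse _ hb _ hc (hsr _ hb _ hc hd) A hA ih
  set f : Set X → Set X := fun A =>
    if h : A.Nonempty then component P s h.some else ∅ with hf
  show Part.ncard ≤ ((component P s) '' P).ncard
  refine Set.ncard_le_ncard_of_injOn f ?_ ?_ (hfin.image _)
  · intro A hA
    obtain ⟨hsub, hne⟩ := hparts A hA
    simp only [hf, dif_pos hne]
    exact Set.mem_image_of_mem _ (hsub hne.some_mem)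
  · intro A hA B hB hAB
    obtain ⟨hsubA, hneA⟩ := hparts A hA
    obtain ⟨hsubB, hneB⟩ := hparts B hB
    simp only [hf, dif_pos hneA, dif_pos hneB] at hAB
    -- hneB.some is in component of hneA.some
    have hqmem : hneB.some ∈ component P s hneA.some := by
      rw [hAB]
      exact ⟨hsubB hneB.some_mem, Relation.ReflTransGen.refl⟩
    have hqA : hneB.some ∈ A := hchain A hA hqmem.2 hneA.some_mem
    obtain ⟨C, -, hCuniq⟩ := hcover hneB.some (hsubB hneB.some_mem)
    exact (hCuniq A ⟨hA, hqA⟩).trans (hCuniq B ⟨hB, hneB.some_mem⟩).symm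

/-- If a partition `Part` of `P` satisfies `CC(P,r) ⊑ Part ⊑ CC(P,(1+ε)r)`, then: if `Part` has at
most `k` parts the `k`-th longest MST edge is at most `(1+ε)r`, and if `Part` has more than `k`
parts it is strictly greater than `r`. -/
theorem stmt15 {X : Type*} [MetricSpace X] (P : Set X) (hfin : P.Finite)
    (r ε : ℝ) (hr : 0 < r) (hε : 0 < ε) (k : ℕ) (hk : 1 ≤ k)
    (Part : Set (Set X))
    (hparts : ∀ A ∈ Part, A ⊆ P ∧ A.Nonempty)
    (hcover : ∀ p ∈ P, ∃! A, A ∈ Part ∧ p ∈ A)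
    (hcoarse : ∀ p ∈ P, ∀ q ∈ P, dist p q ≤ r → ∀ A ∈ Part, p ∈ A → q ∈ A)
    (hfine : ∀ A ∈ Part, ∀ p ∈ A, ∀ q ∈ A, Relation.ReflTransGen (connRel P ((1 + ε) * r)) p q) :
    (Part.ncard ≤ k → ellMST P k ≤ (1 + ε) * r) ∧
    (k < Part.ncard → r < ellMST P k) := by
  classical
  have hPartFin : Part.Finite := by
    apply hfin.finite_subsets.subset
    intro A hA
    exact (hparts A hA).1
  set S : Set ℝ := {s : ℝ | 0 ≤ s ∧ numCC P s ≤ k} with hS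
  have hbdd : BddBelow S := ⟨0, fun x hx => hx.1⟩
  -- S is nonempty: take the maximum pairwise distance (or 0 if P is empty)
  have hSne : S.Nonempty := by
    rcases P.eq_empty_or_nonempty with hP | hP
    · refine ⟨0, le_refl 0, ?_⟩
      simp [numCC, hP]
    · -- take M := max pairwise distance
      obtain ⟨p0, hp0⟩ := hP
      have hprod : (P ×ˢ P).Finite := hfin.prod hfin
      set D : Set ℝ := (fun pq : X × X => dist pq.1 pq.2) '' (P ×ˢ P) with hD
      have hDfin : D.Finite := hprod.image _
      have hDne : D.Nonempty := ⟨dist p0 p0, ⟨(p0, p0), ⟨hp0, hp0⟩, rfl⟩⟩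
      obtain ⟨M, hMD, hMmax⟩ := Set.exists_max_image D id hDfin hDne
      have hMle : ∀ p ∈ P, ∀ q ∈ P, dist p q ≤ M := by
        intro p hp q hq
        exact hMmax (dist p q) ⟨(p, q), ⟨hp, hq⟩, rfl⟩
      have hM0 : 0 ≤ M := by
        obtain ⟨⟨p, q⟩, ⟨hp, hq⟩, rfl⟩ := hMD
        exact dist_nonneg
      refine ⟨M, hM0, ?_⟩
      -- at threshold M everything is one component
      have hcomp : ∀ p ∈ P, component P M p = P := by
        intro p hp
        ext q
        constructor
        · exact fun h => h.1
        · intro hq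
          exact ⟨hq, Relation.ReflTransGen.single ⟨hp, hq, hMle p hp q hq⟩⟩
      have : (component P M) '' P = {P} := by
        apply Set.eq_singleton_iff_nonempty_unique_mem.mpr
        exact ⟨⟨component P M p0, Set.mem_image_of_mem _ hp0⟩,
          by rintro _ ⟨p, hp, rfl⟩; exact hcomp p hp⟩
      simp only [numCC, this, Set.ncard_singleton]
      exact hk
  constructor
  · -- Part 1: Part.ncard ≤ k → ellMST ≤ (1+ε)r
    intro hPk
    have hεr : (0:ℝ) ≤ (1 + ε) * r := by positivity
    -- numCC P ((1+ε)r) ≤ Part.ncard via surjection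
    have hsurj : (component P ((1 + ε) * r)) '' P ⊆
        (fun A : Set X => if h : A.Nonempty then component P ((1 + ε) * r) h.some else ∅)
          '' Part := by
      rintro _ ⟨p, hp, rfl⟩
      obtain ⟨A, ⟨hA, hpA⟩, -⟩ := hcover p hp
      have hne : A.Nonempty := ⟨p, hpA⟩
      refine ⟨A, hA, ?_⟩
      simp only [dif_pos hne]
      exact (component_eq_of_reach P _ (hfine A hA _ hne.some_mem _ hpA)).symm ▸ rfl
    have h1 : numCC P ((1 + ε) * r) ≤ Part.ncard := by
      calc numCC P ((1 + ε) * r) ≤ _ := Set.ncard_le_ncard hsurj (hPartFin.image _)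
        _ ≤ Part.ncard := Set.ncard_image_le hPartFin
    have hmem : (1 + ε) * r ∈ S := ⟨hεr, le_trans h1 hPk⟩
    exact csInf_le hbdd hmem
  · -- Part 2: k < Part.ncard → r < ellMST
    intro hkP
    -- P is nonempty (otherwise Part is empty)
    have hPne : P.Nonempty := by
      rcases P.eq_empty_or_nonempty with hP | hP
      · exfalso
        have : Part = ∅ := by
          ext A
          simp only [Set.mem_empty_iff_false, iff_false]
          intro hA
          obtain ⟨hsub, ⟨x, hx⟩⟩ := hparts A hA
          exact absurd (hsub hx) (by simp [hP])
        rw [this] at hkP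
        simp at hkP
      · exact hP
    -- the set of pairwise distances exceeding r
    set D : Set ℝ := {d : ℝ | ∃ p ∈ P, ∃ q ∈ P, dist p q = d ∧ r < d} with hD
    have hDfin : D.Finite := by
      apply ((hfin.prod hfin).image (fun pq : X × X => dist pq.1 pq.2)).subset
      rintro d ⟨p, hp, q, hq, rfl, -⟩
      exact ⟨(p, q), ⟨hp, hq⟩, rfl⟩
    rcases D.eq_empty_or_nonempty with hDe | hDne
    · -- all distances ≤ r : Part has at most one part, contradiction
      exfalso
      have hall : ∀ p ∈ P, ∀ q ∈ P, dist p q ≤ r := by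
        intro p hp q hq
        by_contra h
        push_neg at h
        exact absurd (show dist p q ∈ D from ⟨p, hp, q, hq, rfl, h⟩) (by simp [hDe])
      have hsub : Part.Subsingleton := by
        intro A hA B hB
        obtain ⟨hsA, ⟨p, hp⟩⟩ := hparts A hA
        obtain ⟨hsB, ⟨q, hq⟩⟩ := hparts B hB
        have hqA : q ∈ A := hcoarse p (hsA hp) q (hsB hq) (hall p (hsA hp) q (hsB hq)) A hA hp
        obtain ⟨C, -, hCuniq⟩ := hcover q (hsB hq)
        exact (hCuniq A ⟨hA, hqA⟩).trans (hCuniq B ⟨hB, hq⟩).symm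
      have : Part.ncard ≤ 1 := by
        rcases hsub.eq_empty_or_singleton with h | ⟨A, h⟩ <;> simp [h]
      omega
    · -- let m be the minimum distance exceeding r
      obtain ⟨m, hmD, hmmin⟩ := Set.exists_min_image D id hDfin hDne
      obtain ⟨p, hp, q, hq, hpq, hrm⟩ := hmD
      -- every element of S is ≥ m
      have hlow : ∀ s ∈ S, m ≤ s := by
        intro s hs
        by_contra hsm
        push_neg at hsm
        have hle : Part.ncard ≤ numCC P s := by
          apply part_card_le hfin hparts hcover hcoarse
          intro a ha b hb hab
          by_contra h
          push_neg at h
          have hdD : dist a b ∈ D := ⟨a, ha, b, hb, rfl, h⟩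
          have hml : m ≤ dist a b := hmmin _ hdD
          linarith
        have := hs.2
        omega
      have hmS : m ≤ sInf S := le_csInf hSne hlow
      calc r < m := hrm
        _ ≤ ellMST P k := hmS
end

section
/- Let P be a finite point set in a metric space and let P' be a Δ-translation of P (same cardinality n). Let e_1 ≤ ... ≤ e_{n−1} be the MST edge weights of P in sorted order and e'_1 ≤ ... ≤ e'_{n−1} those of P'. Then |e_i − e'_i| ≤ 2Δ for every i. -/
/-- The `i`-th smallest MST edge weight of `P` (for `1 ≤ i ≤ |P| - 1`), characterized as the
minimum `r ≥ 0` such that `CC(P, r)` has at most `|P| - i` connected components. -/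
noncomputable def mstEdge {X : Type*} [MetricSpace X] (P : Set X) (i : ℕ) : ℝ :=
  sInf {r : ℝ | 0 ≤ r ∧ numCC P r ≤ P.ncard - i}

open Set Function Relation Metric

theorem Set.ncard_image_le_ncard_image_of_factors {α β γ : Type*} {s : Set α} (hs : s.Finite)
    {g₁ : α → β} {g₂ : α → γ} (h : ∀ a ∈ s, ∀ b ∈ s, g₁ a = g₁ b → g₂ a = g₂ b) :
    (g₂ '' s).ncard ≤ (g₁ '' s).ncard := by
  set pair : α → β × γ := fun a => (g₁ a, g₂ a)
  have hinj : InjOn Prod.fst (pair '' s) := by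
    rintro _ ⟨a, ha, rfl⟩ _ ⟨b, hb, rfl⟩ hab
    simp only [pair] at hab ⊢
    rw [hab, h a ha b hb hab]
  calc (g₂ '' s).ncard = (Prod.snd '' (pair '' s)).ncard := by rw [image_image]
    _ ≤ (pair '' s).ncard := ncard_image_le (hs.image pair)
    _ = (Prod.fst '' (pair '' s)).ncard := hinj.ncard_image.symm
    _ = (g₁ '' s).ncard := by rw [image_image]

theorem dist_le_dist_add_of_dist_le {X : Type*} [PseudoMetricSpace X] {a b a' b' : X} {Δ : ℝ}
    (ha : dist a a' ≤ Δ) (hb : dist b b' ≤ Δ) : dist a' b' ≤ dist a b + 2 * Δ := by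
  have := (abs_sub_le_iff.mp (Real.dist_eq _ _ ▸ dist_dist_dist_le a b a' b')).2
  linarith

section Clustering

variable {X : Type*} [MetricSpace X] {P Q : Set X} {r c : ℝ}

instance connRel.instSymm : Std.Symm (connRel P r) where
  symm _ _ := fun ⟨ha, hb, hd⟩ => ⟨hb, ha, by rwa [dist_comm]⟩

theorem component_eq_of_reflTransGen {p q : X} (h : ReflTransGen (connRel P r) p q) :
    component P r p = component P r q := by
  ext x
  exact and_congr_right fun _ => ⟨(symm h).trans, h.trans⟩

theorem reflTransGen_of_component_eq {p q : X} (hq : q ∈ P)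
    (h : component P r p = component P r q) : ReflTransGen (connRel P r) p q :=
  (show q ∈ component P r p by rw [h]; exact ⟨hq, .refl⟩).2

theorem numCC_diam_le_one (hP : P.Finite) : numCC P (diam P) ≤ 1 := by
  have hsub : component P (diam P) '' P ⊆ {P} := by
    rintro _ ⟨p, hp, rfl⟩
    refine mem_singleton_iff.mpr (ext fun q => ?_)
    exact ⟨fun h => h.1, fun hq => ⟨hq, .single ⟨hp, hq, dist_le_diam_of_mem hP.isBounded hp hq⟩⟩⟩
  exact (ncard_le_ncard hsub).trans (ncard_singleton P).le

theorem numCC_add_le_of_image_eq {f : X → X} (hP : P.Finite) (hf : f '' P = Q)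
    (hd : ∀ a ∈ P, ∀ b ∈ P, dist (f a) (f b) ≤ dist a b + c) (r : ℝ) :
    numCC Q (r + c) ≤ numCC P r := by
  subst hf
  have hedge : connRel P r ≤ (connRel (f '' P) (r + c) on f) := fun a b ⟨ha, hb, hab⟩ =>
    ⟨mem_image_of_mem f ha, mem_image_of_mem f hb, by linarith [hd a ha b hb]⟩
  rw [numCC, numCC, image_image]
  exact ncard_image_le_ncard_image_of_factors hP fun a _ b hb hab =>
    component_eq_of_reflTransGen (ReflTransGen.lift f hedge _ _
      (reflTransGen_of_component_eq hb hab))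

theorem mstEdge_le_mstEdge_add {f : X → X} {i : ℕ} (hP : P.Finite) (hi : i < P.ncard)
    (hc : 0 ≤ c) (hf : BijOn f P Q)
    (hd : ∀ a ∈ P, ∀ b ∈ P, dist (f a) (f b) ≤ dist a b + c) :
    mstEdge Q i ≤ mstEdge P i + c := by
  have hcard : Q.ncard = P.ncard := hf.image_eq ▸ hf.injOn.ncard_image
  have hne : {r : ℝ | 0 ≤ r ∧ numCC P r ≤ P.ncard - i}.Nonempty :=
    ⟨diam P, diam_nonneg, (numCC_diam_le_one hP).trans (by omega)⟩
  rw [← sub_le_iff_le_add]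
  refine le_csInf hne fun r ⟨hr, hrP⟩ => sub_le_iff_le_add.mpr (csInf_le ⟨0, fun _ h => h.1⟩ ?_)
  refine ⟨by linarith, ?_⟩
  calc numCC Q (r + c) ≤ numCC P r := numCC_add_le_of_image_eq hP hf.image_eq hd r
    _ ≤ Q.ncard - i := hcard ▸ hrP

end Clustering

theorem stmt16_general {X : Type*} [MetricSpace X] (P Q : Set X) (hP : P.Finite) (hQ : Q.Finite)
    (n : ℕ) (hPn : P.ncard = n) (hQn : Q.ncard = n)
    (Δ : ℝ) (hΔ : 0 ≤ Δ)
    (f : X → X) (hbij : Set.BijOn f P Q) (hmove : ∀ p ∈ P, dist p (f p) ≤ Δ) :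
    ∀ i, 1 ≤ i → i ≤ n - 1 → |mstEdge P i - mstEdge Q i| ≤ 2 * Δ := by
  intro i hi1 hi2
  obtain ⟨p, -⟩ := nonempty_of_ncard_ne_zero (s := P) (by omega)
  have : Nonempty X := ⟨p⟩
  have hf (a) (ha : a ∈ P) (b) (hb : b ∈ P) : dist (f a) (f b) ≤ dist a b + 2 * Δ :=
    dist_le_dist_add_of_dist_le (hmove a ha) (hmove b hb)
  set g := invFunOn f P
  have hinv : InvOn g f P Q := hbij.invOn_invFunOn
  have hg (a) (ha : a ∈ Q) (b) (hb : b ∈ Q) : dist (g a) (g b) ≤ dist a b + 2 * Δ := by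
    have hmove' (q) (hq : q ∈ Q) : dist (f (g q)) (g q) ≤ Δ := by
      rw [dist_comm]; exact hmove _ (hbij.surjOn.mapsTo_invFunOn hq)
    simpa only [hinv.2 ha, hinv.2 hb] using dist_le_dist_add_of_dist_le (hmove' a ha) (hmove' b hb)
  have hPQ := mstEdge_le_mstEdge_add (i := i) hP (by omega) (by positivity) hbij hf
  have hQP :=
    mstEdge_le_mstEdge_add (i := i) hQ (by omega) (by positivity) (hbij.symm hinv.symm) hg
  rw [abs_sub_le_iff]
  constructor <;> linarith

/-- If `Q` is a `Δ`-translation of `P` (same cardinality `n`), then the `i`-th (sorted) MST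
edge weights of `P` and `Q` differ by at most `2Δ` for every `i`. -/
theorem stmt16 {X : Type*} [MetricSpace X] (P Q : Set X) (hP : P.Finite) (hQ : Q.Finite)
    (n : ℕ) (hn2 : 2 ≤ n) (hPn : P.ncard = n) (hQn : Q.ncard = n)
    (Δ : ℝ) (hΔ : 0 ≤ Δ)
    (f : X → X) (hbij : Set.BijOn f P Q) (hmove : ∀ p ∈ P, dist p (f p) ≤ Δ) :
    ∀ i, 1 ≤ i → i ≤ n - 1 → |mstEdge P i - mstEdge Q i| ≤ 2 * Δ :=
  stmt16_general P Q hP hQ n hPn hQn Δ hΔ f hbij hmove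
end

section
/- Let P be a finite point set in a metric space, and let p ∈ P have nearest-neighbor distance at least r, where r is strictly greater than the k-th longest MST edge of P. Then the k-th longest MST edge of P \ {p} (with k replaced by k−1) equals the k-th longest MST edge of P; specifically, deleting p and decrementing k leaves the target value ℓ_MST(P, k) unchanged: ℓ_MST(P, k) = ℓ_MST(P \ {p}, k−1). -/
open Set

theorem csInf_le_csInf_of_inter_Iio_subset {α : Type*} [ConditionallyCompleteLinearOrder α]
    {A B : Set α} {r : α} (hA : BddBelow A) (hB : B.Nonempty) (hBA : B ∩ Iio r ⊆ A)
    (hAr : sInf A < r) : sInf A ≤ sInf B :=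
  le_csInf hB fun b hb => (lt_or_ge b r).elim
    (fun hbr => csInf_le hA (hBA ⟨hb, hbr⟩)) (fun hrb => (hAr.trans_le hrb).le)

theorem csInf_eq_csInf_of_inter_Iio_eq {α : Type*} [ConditionallyCompleteLinearOrder α]
    {A B : Set α} {r : α} (hA : BddBelow A) (hB : BddBelow B) (hAne : A.Nonempty)
    (hAB : A ∩ Iio r = B ∩ Iio r) (hAr : sInf A < r) : sInf A = sInf B := by
  obtain ⟨a, haA, har⟩ := exists_lt_of_csInf_lt hAne hAr
  have haB : a ∈ B ∩ Iio r := hAB ▸ ⟨haA, har⟩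
  have hBr : sInf B < r := (csInf_le hB haB.1).trans_lt har
  exact le_antisymm
    (csInf_le_csInf_of_inter_Iio_subset hA ⟨a, haB.1⟩ (hAB ▸ inter_subset_left) hAr)
    (csInf_le_csInf_of_inter_Iio_subset hB hAne (hAB ▸ inter_subset_left) hBr)

section IsolatedPoint

variable {X : Type*} [MetricSpace X] {P : Set X} {p : X} {s : ℝ}

theorem eq_of_reflTransGen_connRel_of_isolated (hiso : ∀ q ∈ P, q ≠ p → s < dist q p) {q : X}
    (h : Relation.ReflTransGen (connRel P s) p q) : q = p := by
  induction h with
  | refl => rfl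
  | tail _ hstep ih =>
    subst ih
    obtain ⟨-, hcP, hdist⟩ := hstep
    by_contra hne
    rw [dist_comm] at hdist
    exact (hiso _ hcP hne).not_ge hdist

theorem reflTransGen_connRel_diff_of_isolated (hiso : ∀ q ∈ P, q ≠ p → s < dist q p)
    {q x : X} (hq : q ≠ p) (h : Relation.ReflTransGen (connRel P s) q x) :
    Relation.ReflTransGen (connRel (P \ {p}) s) q x ∧ x ≠ p := by
  induction h with
  | refl => exact ⟨.refl, hq⟩
  | @tail b c _ hstep ih =>
    obtain ⟨hbP, hcP, hdist⟩ := hstep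
    have hc : c ≠ p := by
      rintro rfl
      exact (hiso b hbP ih.2).not_ge hdist
    exact ⟨ih.1.tail ⟨⟨hbP, ih.2⟩, ⟨hcP, hc⟩, hdist⟩, hc⟩

theorem component_of_isolated (hp : p ∈ P) (hiso : ∀ q ∈ P, q ≠ p → s < dist q p) :
    component P s p = {p} :=
  Subset.antisymm (fun _ hx => eq_of_reflTransGen_connRel_of_isolated hiso hx.2)
    (singleton_subset_iff.2 ⟨hp, .refl⟩)

theorem component_diff_of_isolated (hiso : ∀ q ∈ P, q ≠ p → s < dist q p) {q : X}
    (hq : q ≠ p) : component (P \ {p}) s q = component P s q := by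
  ext x
  constructor
  · rintro ⟨hx, h⟩
    exact ⟨hx.1, Relation.ReflTransGen.mono (fun _ _ hab => ⟨hab.1.1, hab.2.1.1, hab.2.2⟩) _ _ h⟩
  · rintro ⟨hxP, h⟩
    obtain ⟨h', hx⟩ := reflTransGen_connRel_diff_of_isolated hiso hq h
    exact ⟨⟨hxP, hx⟩, h'⟩

theorem numCC_of_isolated (hfin : P.Finite) (hp : p ∈ P)
    (hiso : ∀ q ∈ P, q ≠ p → s < dist q p) :
    numCC P s = numCC (P \ {p}) s + 1 := by
  have himage : component P s '' P = insert {p} (component (P \ {p}) s '' (P \ {p})) := by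
    calc component P s '' P = insert (component P s p) (component P s '' (P \ {p})) := by
          rw [← image_insert_eq, insert_sdiff_self_of_mem hp]
      _ = _ := by
          rw [component_of_isolated hp hiso]
          exact congrArg _ (image_congr fun q hq => (component_diff_of_isolated hiso hq.2).symm)
  have hnotMem : ({p} : Set X) ∉ component (P \ {p}) s '' (P \ {p}) := by
    rintro ⟨q, hq, hqp⟩
    exact hq.2 (hqp ▸ (⟨hq, .refl⟩ : q ∈ component (P \ {p}) s q))
  rw [numCC, numCC, himage, ncard_insert_of_notMem hnotMem (hfin.sdiff.image _)]

end IsolatedPoint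

theorem exists_numCC_le_one {X : Type*} [MetricSpace X] {P : Set X} (hfin : P.Finite) :
    ∃ s : ℝ, 0 ≤ s ∧ numCC P s ≤ 1 := by
  obtain ⟨C, hC⟩ := Metric.isBounded_iff.1 hfin.isBounded
  refine ⟨max C 0, le_max_right _ _, ?_⟩
  have hcomponent : component P (max C 0) '' P ⊆ {P} := by
    rintro _ ⟨q, hq, rfl⟩
    exact Subset.antisymm (fun _ hx => hx.1)
      fun x hx => ⟨hx, .single ⟨hq, hx, (hC hq hx).trans (le_max_left _ _)⟩⟩
  simpa [numCC] using ncard_le_ncard hcomponent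

/-- If `p ∈ P` has nearest-neighbor distance at least `r`, where `r` is strictly greater
than the `k`-th longest MST edge of `P`, then deleting `p` and decrementing `k` leaves the
`k`-th longest MST edge unchanged: `ℓ_MST(P, k) = ℓ_MST(P \ {p}, k-1)`. -/
theorem stmt17 {X : Type*} [MetricSpace X] (P : Set X) (hfin : P.Finite)
    (p : X) (hp : p ∈ P) (k : ℕ) (hk : 2 ≤ k) (r : ℝ)
    (hfar : ∀ q ∈ P, q ≠ p → r ≤ dist q p)
    (hgt : ellMST P k < r) :
    ellMST P k = ellMST (P \ {p}) (k - 1) := by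
  have hsame : {s : ℝ | 0 ≤ s ∧ numCC P s ≤ k} ∩ Iio r
      = {s : ℝ | 0 ≤ s ∧ numCC (P \ {p}) s ≤ k - 1} ∩ Iio r := by
    ext s
    simp only [mem_inter_iff, mem_ofPred_eq, mem_Iio]
    refine and_congr_left fun hs => ?_
    rw [numCC_of_isolated hfin hp fun q hq hqp => hs.trans_le (hfar q hq hqp)]
    exact and_congr_right fun _ => by omega
  obtain ⟨s, hs, hsk⟩ := exists_numCC_le_one hfin
  exact csInf_eq_csInf_of_inter_Iio_eq ⟨0, fun _ h => h.1⟩ ⟨0, fun _ h => h.1⟩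
    ⟨s, hs, hsk.trans (by omega)⟩ hsame hgt
end

section
/- Let P ⊂ ℝ^d and s > 0, and let C be the set of points p ∈ P such that B(p, s) ∩ P contains at most m points and the ball B(p, s/(m+2)) around p contains a point of P other than p. Then every point of C lies in a connected component of the (s/(m+2))-connectivity clustering of P that has at least 2 and at most m points. -/
open Relation Set

variable {X : Type*} [MetricSpace X] {P : Set X} {r : ℝ} {p x : X}

theorem exists_mem_component_dist_mem_Ico (hp : p ∈ P) (hr : 0 < r)
    (hx : x ∈ component P r p) {v : ℝ} (hv : 0 ≤ v) (hvx : v ≤ dist p x) :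
    ∃ y ∈ component P r p, dist p y ∈ Ico v (v + r) := by
  obtain ⟨-, hx⟩ := hx
  induction hx with
  | refl =>
    obtain rfl : v = 0 := le_antisymm (by simpa using hvx) hv
    exact ⟨p, ⟨hp, .refl⟩, by simp [hr]⟩
  | @tail b c hpb hbc ih =>
    by_cases hvb : v ≤ dist p b
    · exact ih hvb
    · refine ⟨c, ⟨hbc.2.1, hpb.tail hbc⟩, hvx, ?_⟩
      linarith [dist_triangle p b c, hbc.2.2]

theorem le_ncard_of_mem_component (hp : p ∈ P) (hr : 0 < r) {n : ℕ}
    (hfin : {q ∈ P | dist p q < (n + 1) * r}.Finite) (hx : x ∈ component P r p)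
    (hnx : n * r ≤ dist p x) :
    n + 1 ≤ {q ∈ P | dist p q < (n + 1) * r}.ncard := by
  have hk : ∀ k : Fin (n + 1), (k : ℝ) ≤ n := fun k => by exact_mod_cast Nat.lt_succ_iff.1 k.isLt
  have hlevel : ∀ k : Fin (n + 1), ∃ y ∈ component P r p, dist p y ∈ Ico (k * r) (k * r + r) :=
    fun k => exists_mem_component_dist_mem_Ico hp hr hx (by positivity)
      ((mul_le_mul_of_nonneg_right (hk k) hr.le).trans hnx)
  choose y hy hdist using hlevel
  have hmem : ∀ k, y k ∈ {q ∈ P | dist p q < (n + 1) * r} :=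
    fun k => ⟨(hy k).1, by nlinarith [(hdist k).2, hk k]⟩
  have hmono : StrictMono fun k => dist p (y k) := by
    intro a b hab
    have hab' : (a : ℝ) + 1 ≤ b := by exact_mod_cast hab
    nlinarith [(hdist a).2, (hdist b).1]
  have : Finite {q ∈ P | dist p q < (n + 1) * r} := hfin.to_subtype
  have hinj : Function.Injective fun k => (⟨y k, hmem k⟩ : {q ∈ P | dist p q < (n + 1) * r}) :=
    fun a b hab => hmono.injective (congrArg (fun z => dist p z.1) hab)
  simpa only [Nat.card_fin, Nat.card_coe_set_eq] using Nat.card_le_card_of_injective _ hinj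

theorem component_subset_of_ncard_le (hp : p ∈ P) (hr : 0 < r) {s : ℝ} {m : ℕ}
    (hfin : {q ∈ P | dist p q ≤ s}.Finite) (hrs : (m + 1) * r ≤ s)
    (hball : {q ∈ P | dist p q ≤ s}.ncard ≤ m) :
    component P r p ⊆ {q ∈ P | dist p q ≤ s} := by
  intro x hx
  refine ⟨hx.1, ?_⟩
  by_contra! hsx
  have hsub : {q ∈ P | dist p q < (m + 1) * r} ⊆ {q ∈ P | dist p q ≤ s} :=
    fun q hq => ⟨hq.1, hq.2.le.trans hrs⟩
  have hmany := le_ncard_of_mem_component hp hr (hfin.subset hsub) hx (by linarith)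
  have := ncard_le_ncard hsub hfin
  omega

theorem two_le_ncard_component (hfin : (component P r p).Finite) (hp : p ∈ P) {q : X}
    (hq : q ∈ P) (hqp : q ≠ p) (hpq : dist p q ≤ r) : 2 ≤ (component P r p).ncard := by
  have hpair : {p, q} ⊆ component P r p :=
    pair_subset ⟨hp, .refl⟩ ⟨hq, .single ⟨hp, hq, hpq⟩⟩
  simpa [ncard_pair hqp.symm] using ncard_le_ncard hpair hfin

theorem stmt19_general (d : ℕ) (P : Set (EuclideanSpace ℝ (Fin d))) (hfin : P.Finite)
    (s : ℝ) (m : ℕ) (p : EuclideanSpace ℝ (Fin d)) (hp : p ∈ P)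
    (hball : ({q ∈ P | dist p q ≤ s}).ncard ≤ m)
    (hnontriv : ∃ q ∈ P, q ≠ p ∧ dist p q ≤ s / ((m : ℝ) + 2)) :
    2 ≤ (component P (s / ((m : ℝ) + 2)) p).ncard ∧
      (component P (s / ((m : ℝ) + 2)) p).ncard ≤ m := by
  obtain ⟨q, hq, hqp, hpq⟩ := hnontriv
  set r := s / ((m : ℝ) + 2)
  have hr : 0 < r := (dist_pos.2 hqp.symm).trans_le hpq
  have hrs : ((m : ℝ) + 1) * r ≤ s := calc
    ((m : ℝ) + 1) * r ≤ ((m : ℝ) + 2) * r := by gcongr; norm_num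
    _ = s := mul_div_cancel₀ s (by positivity)
  have hball_fin : {q ∈ P | dist p q ≤ s}.Finite := hfin.subset (sep_subset _ _)
  exact ⟨two_le_ncard_component (hfin.subset fun _ hx => hx.1) hp hq hqp hpq,
    (ncard_le_ncard (component_subset_of_ncard_le hp hr hball_fin hrs hball) hball_fin).trans
      hball⟩

/-- Let `P ⊂ ℝ^d` be finite and `s > 0`. If `p ∈ P` is such that the ball `B(p, s)` contains
at most `m` points of `P` and the ball `B(p, s/(m+2))` contains a point of `P` other than
`p`, then the connected component of `p` in the `s/(m+2)`-connectivity clustering of `P` has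
at least `2` and at most `m` points. -/
theorem stmt19 (d : ℕ) (P : Set (EuclideanSpace ℝ (Fin d))) (hfin : P.Finite)
    (s : ℝ) (hs : 0 < s) (m : ℕ) (p : EuclideanSpace ℝ (Fin d)) (hp : p ∈ P)
    (hball : ({q ∈ P | dist p q ≤ s}).ncard ≤ m)
    (hnontriv : ∃ q ∈ P, q ≠ p ∧ dist p q ≤ s / ((m : ℝ) + 2)) :
    2 ≤ (component P (s / ((m : ℝ) + 2)) p).ncard ∧
      (component P (s / ((m : ℝ) + 2)) p).ncard ≤ m :=
  stmt19_general d P hfin s m p hp hball hnontriv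
end
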